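/- Let H_• be a subproduct system with left shifts S_k and right shifts R_k on Fock space H_ℕ (where R_k ψ := p_{m+1}(ψ ⊗ e_k) for ψ ∈ H_m). Then for A ∈ B(H_m) and m ≤ l, the map ι_{m,l}(A) := p_l(A ⊗ 1_{H^{⊗(l−m)}})p_l equals Σ_{|k|=l−m} R_k A R_k* restricted to H_l, and also equals Σ_{|j|=m=|k|} A_{j,k} S_j S_k* restricted to H_l, where A_{j,k} = ⟨e_j, A e_k⟩. -/

import Mathlib

open scoped Matrix

noncomputable section

/-- Words of length `m` in the alphabet `{1,…,n}`. -/
abbrev Wd (n m : ℕ) := Fin m → Fin n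

/-- The `m`-th full tensor power `H^{⊗m}` of `H = ℂ^n`, realized as the Euclidean
space with orthonormal basis indexed by words of length `m`. -/
abbrev TP (n m : ℕ) : Type := EuclideanSpace ℂ (Wd n m)

variable {n : ℕ}

/-- Continuous linear map associated to a (possibly rectangular) matrix. -/
def ofMatR {ι κ : Type} [Fintype ι] [Fintype κ] [DecidableEq ι] [DecidableEq κ]
    (M : Matrix ι κ ℂ) : EuclideanSpace ℂ κ →L[ℂ] EuclideanSpace ℂ ι :=
  LinearMap.toContinuousLinearMap (Matrix.toEuclideanLin M)

/-- Matrix entry of an operator in the standard basis. -/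
def ent {a : ℕ} (A : TP n a →L[ℂ] TP n a) (w v : Wd n a) : ℂ :=
  A (EuclideanSpace.single v 1) w

def wfst {m k : ℕ} (w : Wd n (m + k)) : Wd n m := fun i => w (Fin.castAdd k i)
def wsnd {m k : ℕ} (w : Wd n (m + k)) : Wd n k := fun i => w (Fin.natAdd m i)

/-- Tensor product of vectors, under the identification `H^{⊗m} ⊗ H^{⊗k} = H^{⊗(m+k)}`. -/
def tmul {m k : ℕ} (x : TP n m) (y : TP n k) : TP n (m + k) :=
  (WithLp.equiv 2 _).symm (fun w => x (wfst w) * y (wsnd w))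

/-- Tensor product of subspaces `K ⊗ L ⊆ H^{⊗(m+k)}`. -/
def tensorSub {m k : ℕ} (K : Submodule ℂ (TP n m)) (L : Submodule ℂ (TP n k)) :
    Submodule ℂ (TP n (m + k)) :=
  Submodule.span ℂ {z | ∃ x ∈ K, ∃ y ∈ L, z = tmul x y}

/-- Tensor product of operators, under `H^{⊗m} ⊗ H^{⊗k} = H^{⊗(m+k)}`. -/
def opT {m k : ℕ} (A : TP n m →L[ℂ] TP n m) (B : TP n k →L[ℂ] TP n k) :
    TP n (m + k) →L[ℂ] TP n (m + k) :=
  ofMatR (Matrix.of fun w v => ent A (wfst w) (wfst v) * ent B (wsnd w) (wsnd v))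

/-- A subproduct system: `H_0 = ℂ` and `H_{m+k} ⊆ H_m ⊗ H_k`. -/
def IsSubproduct (H : ∀ m, Submodule ℂ (TP n m)) : Prop :=
  H 0 = ⊤ ∧ ∀ m k, H (m + k) ≤ tensorSub (H m) (H k)

/-- The orthogonal projection `p_m : H^{⊗m} → H_m` (as an operator on `H^{⊗m}`). -/
def prj (H : ∀ m, Submodule ℂ (TP n m)) (m : ℕ) : TP n m →L[ℂ] TP n m :=
  (H m).subtypeL ∘L (H m).orthogonalProjection

/-- Left creation operator `x ↦ e_j ⊗ x`. -/
def lcreate (j : Fin n) (m : ℕ) : TP n m →L[ℂ] TP n (m + 1) :=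
  ofMatR (Matrix.of fun (w : Wd n (m + 1)) (v : Wd n m) =>
    if w 0 = j ∧ (fun i : Fin m => w i.succ) = v then 1 else 0)

/-- Right creation operator `x ↦ x ⊗ e_j`. -/
def rcreate (j : Fin n) (m : ℕ) : TP n m →L[ℂ] TP n (m + 1) :=
  ofMatR (Matrix.of fun (w : Wd n (m + 1)) (v : Wd n m) =>
    if w (Fin.last m) = j ∧ (fun i : Fin m => w i.castSucc) = v then 1 else 0)

/-- Graded component of the left shift `S_j : H_m → H_{m+1}`, `φ ↦ p_{m+1}(e_j ⊗ φ)`. -/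
def lsh (H : ∀ m, Submodule ℂ (TP n m)) (j : Fin n) (m : ℕ) : TP n m →L[ℂ] TP n (m + 1) :=
  prj H (m + 1) ∘L lcreate j m ∘L prj H m

/-- Graded component of the right shift `R_j : H_m → H_{m+1}`, `φ ↦ p_{m+1}(φ ⊗ e_j)`. -/
def rsh (H : ∀ m, Submodule ℂ (TP n m)) (j : Fin n) (m : ℕ) : TP n m →L[ℂ] TP n (m + 1) :=
  prj H (m + 1) ∘L rcreate j m ∘L prj H m

/-- Iterated left shift `S_r = S_{r_1} ⋯ S_{r_d}` as a map `H_m → H_{m+d}`. -/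
def lshW (H : ∀ m, Submodule ℂ (TP n m)) (m : ℕ) :
    ∀ d, Wd n d → (TP n m →L[ℂ] TP n (m + d))
  | 0, _ => ContinuousLinearMap.id ℂ _
  | d + 1, r => lsh H (r 0) (m + d) ∘L lshW H m d (Fin.tail r)

/-- Iterated right shift `R_r = R_{r_1} ⋯ R_{r_d}` as a map `H_m → H_{m+d}`. -/
def rshW (H : ∀ m, Submodule ℂ (TP n m)) (m : ℕ) :
    ∀ d, Wd n d → (TP n m →L[ℂ] TP n (m + d))
  | 0, _ => ContinuousLinearMap.id ℂ _
  | d + 1, r => rsh H (r (Fin.last d)) (m + d) ∘L rshW H m d (Fin.init r)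

/-- Canonical unitary identification `H^{⊗a} = H^{⊗b}` for `a = b`. -/
def castTP {a b : ℕ} (h : a = b) : TP n a →L[ℂ] TP n b :=
  ofMatR (Matrix.of fun (w : Wd n b) (v : Wd n a) =>
    if (fun i => w (Fin.cast h i)) = v then 1 else 0)

/-- `S_s : H_m → H_l` for a word `s` of length `l - m`. -/
def lshWTo (H : ∀ m, Submodule ℂ (TP n m)) (m l : ℕ) (h : m ≤ l) (s : Wd n (l - m)) :
    TP n m →L[ℂ] TP n l :=
  castTP (by omega : m + (l - m) = l) ∘L lshW H m (l - m) s

/-- `R_r : H_m → H_l` for a word `r` of length `l - m`. -/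
def rshWTo (H : ∀ m, Submodule ℂ (TP n m)) (m l : ℕ) (h : m ≤ l) (r : Wd n (l - m)) :
    TP n m →L[ℂ] TP n l :=
  castTP (by omega : m + (l - m) = l) ∘L rshW H m (l - m) r

/-- Extension of an operator on `H_m` by zero to `H^{⊗m}`. -/
def extOp (H : ∀ m, Submodule ℂ (TP n m)) {m : ℕ} (A : ↥(H m) →L[ℂ] ↥(H m)) :
    TP n m →L[ℂ] TP n m :=
  (H m).subtypeL ∘L A ∘L (H m).orthogonalProjection

/-- Compression of an operator on `H^{⊗m}` to `H_m`. -/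
def cmpOp (H : ∀ m, Submodule ℂ (TP n m)) {m : ℕ} (T : TP n m →L[ℂ] TP n m) :
    ↥(H m) →L[ℂ] ↥(H m) :=
  (H m).orthogonalProjection ∘L T ∘L (H m).subtypeL

def tk {m l : ℕ} (h : m ≤ l) (w : Wd n l) : Wd n m := fun i => w (Fin.castLE h i)
def dr (m : ℕ) {l : ℕ} (w : Wd n l) : Wd n (l - m) :=
  fun i => w ⟨m + i.1, by have := i.isLt; omega⟩

/-- `A ⊗ B` on `H^{⊗l} = H^{⊗m} ⊗ H^{⊗(l-m)}`. -/
def opTG {m l : ℕ} (h : m ≤ l) (A : TP n m →L[ℂ] TP n m)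
    (B : TP n (l - m) →L[ℂ] TP n (l - m)) : TP n l →L[ℂ] TP n l :=
  ofMatR (Matrix.of fun w v => ent A (tk h w) (tk h v) * ent B (dr m w) (dr m v))

/-- The inductive-system map `ι_{m,l}(A) = p_l (A ⊗ 1) p_l : B(H_m) → B(H_l)`. -/
def iota (H : ∀ m, Submodule ℂ (TP n m)) {m l : ℕ} (h : m ≤ l)
    (A : ↥(H m) →L[ℂ] ↥(H m)) : ↥(H l) →L[ℂ] ↥(H l) :=
  cmpOp H (opTG h (extOp H A) (ContinuousLinearMap.id ℂ (TP n (l - m))))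

/-- The chirality-flipped inductive map `ῑ_{m,l}(A) = Σ_{|s|=l-m} S_s A S_s^* |_{H_l}`. -/
def iotabar (H : ∀ m, Submodule ℂ (TP n m)) {m l : ℕ} (h : m ≤ l)
    (A : ↥(H m) →L[ℂ] ↥(H m)) : ↥(H l) →L[ℂ] ↥(H l) :=
  cmpOp H (∑ s : Wd n (l - m),
    lshWTo H m l h s ∘L extOp H A ∘L ContinuousLinearMap.adjoint (lshWTo H m l h s))

/-- The word `j` of length one. -/
def letter (j : Fin n) : Wd n 1 := fun _ => j

/-- `Q^{⊗m}` on `H^{⊗m}`. -/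
def tpow (Q : TP n 1 →L[ℂ] TP n 1) (m : ℕ) : TP n m →L[ℂ] TP n m :=
  ofMatR (Matrix.of fun w v => ∏ i : Fin m, ent Q (letter (w i)) (letter (v i)))

/-- Diagonal entry `(Q^{⊗d})_{r,r}`. -/
def Qdg (Q : TP n 1 →L[ℂ] TP n 1) {d : ℕ} (r : Wd n d) : ℂ :=
  ∏ i, ent Q (letter (r i)) (letter (r i))

/-- Trace of an operator. -/
def trOp {E : Type*} [NormedAddCommGroup E] [Module ℂ E] (A : E →L[ℂ] E) : ℂ :=
  LinearMap.trace ℂ E A.toLinearMap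

/-- `Tr(Q_m)` where `Q_m = p_m Q^{⊗m} p_m ∈ B(H_m)`. -/
def trQ (H : ∀ m, Submodule ℂ (TP n m)) (Q : TP n 1 →L[ℂ] TP n 1) (m : ℕ) : ℂ :=
  trOp (cmpOp H (tpow Q m))

/-- The state `φ_m(A) = Tr(ρ^{(m)} A)`, `ρ^{(m)} = Q_m / Tr(Q_m)`. -/
def phiSt (H : ∀ m, Submodule ℂ (TP n m)) (Q : TP n 1 →L[ℂ] TP n 1) (m : ℕ)
    (A : ↥(H m) →L[ℂ] ↥(H m)) : ℂ :=
  trOp (cmpOp H (tpow Q m) ∘L A) / trQ H Q m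

/-- The projective-system map
`j_{l,m}(A) = (Tr Q_m / Tr Q_l) Σ_{|r|=l-m} (Q^{⊗(l-m)})_{r,r} R_r^* A R_r |_{H_m}`. -/
def jmap (H : ∀ m, Submodule ℂ (TP n m)) (Q : TP n 1 →L[ℂ] TP n 1) {m l : ℕ} (h : m ≤ l)
    (A : ↥(H l) →L[ℂ] ↥(H l)) : ↥(H m) →L[ℂ] ↥(H m) :=
  (trQ H Q m / trQ H Q l) • cmpOp H (∑ r : Wd n (l - m),
    Qdg Q r • (ContinuousLinearMap.adjoint (rshWTo H m l h r) ∘L extOp H A ∘L rshWTo H m l h r))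

/-- `ρ^{(m)} = Q_m / Tr(Q_m)`, extended by zero to `H^{⊗m}`. -/
def rhoExt (H : ∀ m, Submodule ℂ (TP n m)) (Q : TP n 1 →L[ℂ] TP n 1) (m : ℕ) :
    TP n m →L[ℂ] TP n m :=
  (trQ H Q m)⁻¹ • (prj H m ∘L tpow Q m ∘L prj H m)

/-- The normalization constant `√(Tr(Q_m)Tr(Q_k)/Tr(Q_{m+k}))`. -/
def lamC (H : ∀ m, Submodule ℂ (TP n m)) (Q : TP n 1 →L[ℂ] TP n 1) (m k : ℕ) : ℂ :=
  (trQ H Q m * trQ H Q k / trQ H Q (m + k)) ^ ((1 : ℂ) / 2)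

/-- Right tensoring `x ↦ x ⊗ y` as a continuous linear map. -/
def tensR {m k : ℕ} (y : TP n k) : TP n m →L[ℂ] TP n (m + k) :=
  ofMatR (Matrix.of fun w v => if wfst w = v then y (wsnd w) else 0)

/-- The map `V_{m,l} ψ = √(TrQ_m TrQ_{l-m}/TrQ_l) Σ_{|r|=l-m} p_l (R_r^* ψ ⊗ e_r)`,
realized as an operator on `H^{⊗(m+k)}` (with `l = m + k`). -/
def Vml (H : ∀ m, Submodule ℂ (TP n m)) (Q : TP n 1 →L[ℂ] TP n 1) (m k : ℕ) :
    TP n (m + k) →L[ℂ] TP n (m + k) :=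
  lamC H Q m k • ∑ r : Wd n k,
    prj H (m + k) ∘L tensR (EuclideanSpace.single r 1) ∘L
      ContinuousLinearMap.adjoint (rshW H m k r)

/-- The claimed adjoint `V_{m,l}^* = √(⋯) (ρ^{(l)})^{-1}(ρ^{(m)} ⊗ ρ^{(l-m)})`. -/
def VmlStar (H : ∀ m, Submodule ℂ (TP n m)) (Q : TP n 1 →L[ℂ] TP n 1) (m k : ℕ) :
    TP n (m + k) →L[ℂ] TP n (m + k) :=
  lamC H Q m k •
    (extOp H (trQ H Q (m + k) • Ring.inverse (cmpOp H (tpow Q (m + k)))) ∘L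
      opT (rhoExt H Q m) (rhoExt H Q k))

/-- The adjoint, with instances supplied explicitly. -/
def adjC {E F : Type*} [NormedAddCommGroup E] [NormedAddCommGroup F]
    [InnerProductSpace ℂ E] [InnerProductSpace ℂ F] [CompleteSpace E] [CompleteSpace F]
    (T : E →L[ℂ] F) : F →L[ℂ] E :=
  @ContinuousLinearMap.adjoint ℂ E F _ _ _ _ _ _ _ T

/-- Complete positivity of a map between operator algebras on Hilbert spaces:
positive matrices over the domain are sent to positive matrices over the codomain.
(Here `Nᴴ` is written as the transpose of the entrywise adjoint.) -/
def IsCP {E F' : Type*} [NormedAddCommGroup E] [InnerProductSpace ℂ E] [CompleteSpace E]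
    [NormedAddCommGroup F'] [InnerProductSpace ℂ F'] [CompleteSpace F']
    (Φ : (E →L[ℂ] E) → (F' →L[ℂ] F')) : Prop :=
  ∀ (d : ℕ) (M : Matrix (Fin d) (Fin d) (E →L[ℂ] E)),
    (∃ N : Matrix (Fin d) (Fin d) (E →L[ℂ] E), M = (N.map fun T => adjC T)ᵀ * N) →
    ∃ N' : Matrix (Fin d) (Fin d) (F' →L[ℂ] F'), M.map Φ = (N'.map fun T => adjC T)ᵀ * N'

/-- The vacuum vector `Ω ∈ H^{⊗0} = ℂ`. -/
def vac (n : ℕ) : TP n 0 := EuclideanSpace.single default 1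

/-- The symmetric subspace `H^{∨m} ⊆ H^{⊗m}`. -/
def symSub (n m : ℕ) : Submodule ℂ (TP n m) where
  carrier := {x | ∀ (σ : Equiv.Perm (Fin m)) (w : Wd n m), x (w ∘ σ) = x w}
  add_mem' := by
    intro a b ha hb σ w
    show (a + b) (w ∘ σ) = (a + b) w
    simp only [PiLp.add_apply, ha σ w, hb σ w]
  zero_mem' := by
    intro σ w
    show (0 : TP n m) (w ∘ σ) = (0 : TP n m) w
    simp
  smul_mem' := by
    intro c x hx σ w
    show (c • x) (w ∘ σ) = (c • x) w
    simp only [PiLp.smul_apply, hx σ w]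

/-- Rank-one operator `|x⟩⟨x|`. -/
def rankOne {F : Type*} [NormedAddCommGroup F] [InnerProductSpace ℂ F] (x : F) :
    F →L[ℂ] F :=
  (innerSL ℂ x).smulRight x

end

/-!
For the creation operators `x ↦ x ⊗ e_r` and `y ↦ e_j ⊗ y` on the full tensor powers
(`rcreateW`, `lcreateW`) the two formulas are matrix identities:
`∑_r (x ↦ x ⊗ e_r) B (x ↦ x ⊗ e_r)^* = B ⊗ 1` and
`∑_{j,j'} B_{j,j'} (y ↦ e_j ⊗ y)(y ↦ e_{j'} ⊗ y)^* = B ⊗ 1`.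
Since `H_{m+k} ⊆ H_m ⊗ H_k`, the annihilation operators map `H_{m+k}` into `H_m`, resp. `H_k`.
By induction on the length of the word, the adjoints of the shifts `R_r`, `S_j` therefore agree
with those of the creation operators on `H_{m+k}`, i.e. `p_{m+k} R_r = p_{m+k} (x ↦ x ⊗ e_r)`
and `p_{m+k} S_j = p_{m+k} (y ↦ e_j ⊗ y)`, and compressing the matrix identities by
`p_{m+k}` gives the theorem.
-/

open ContinuousLinearMap

variable {n : ℕ}

section Matrix

variable {ι κ μ : Type} [Fintype ι] [Fintype κ] [Fintype μ]
  [DecidableEq ι] [DecidableEq κ] [DecidableEq μ]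

lemma ofMatR_apply (M : Matrix ι κ ℂ) (x : EuclideanSpace ℂ κ) (w : ι) :
    ofMatR M x w = ∑ v, M w v * x v := by
  simp [ofMatR, Matrix.toLpLin_apply, Matrix.mulVec, dotProduct]

lemma ofMatR_mul (M : Matrix ι κ ℂ) (N : Matrix κ μ ℂ) :
    ofMatR (M * N) = ofMatR M ∘L ofMatR N := by
  ext x : 1
  simp [ofMatR, Matrix.toEuclideanLin]

lemma ofMatR_sum {α : Type} (s : Finset α) (M : α → Matrix ι κ ℂ) :
    ofMatR (∑ a ∈ s, M a) = ∑ a ∈ s, ofMatR (M a) := by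
  simp [ofMatR, map_sum]

lemma ofMatR_smul (c : ℂ) (M : Matrix ι κ ℂ) : ofMatR (c • M) = c • ofMatR M := by
  simp [ofMatR]

lemma ofMatR_one : ofMatR (1 : Matrix ι ι ℂ) = ContinuousLinearMap.id ℂ _ := by
  ext x : 1
  simp [ofMatR]

lemma adjoint_ofMatR (M : Matrix ι κ ℂ) : adjoint (ofMatR M) = ofMatR Mᴴ := by
  ext x : 1
  simp [ofMatR, Matrix.toEuclideanLin_conjTranspose_eq_adjoint,
    LinearMap.adjoint_toContinuousLinearMap]

end Matrix

lemma ofMatR_of_ent {a : ℕ} (T : TP n a →L[ℂ] TP n a) : ofMatR (Matrix.of (ent T)) = T := by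
  refine coe_injective ((EuclideanSpace.basisFun _ ℂ).toBasis.ext fun v => ?_)
  ext w
  simp [ofMatR_apply, ent]

lemma ent_id {a : ℕ} (w v : Wd n a) :
    ent (ContinuousLinearMap.id ℂ (TP n a)) w v = if w = v then 1 else 0 := by
  simp [ent, PiLp.single_apply]

section Words

variable {m k l : ℕ}

def pfx (h : m + k = l) (w : Wd n l) : Wd n m := fun i => w ⟨i, by omega⟩

def sfx (h : m + k = l) (w : Wd n l) : Wd n k := fun i => w ⟨m + i, by omega⟩

lemma tk_eq_pfx (h : m + k = l) (w : Wd n l) : tk (by omega) w = pfx h w := rfl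

lemma dr_eq_dr_iff (h : m + k = l) (w v : Wd n l) : dr m w = dr m v ↔ sfx h w = sfx h v :=
  show sfx h w ∘ finCongr (by omega) = sfx h v ∘ finCongr _ ↔ _ from
    (Function.Surjective.injective_comp_right (finCongr (by omega : l - m = k)).surjective).eq_iff

lemma pfx_sfx_eq_iff (w : Wd n (m + k)) (x : Wd n m) (r : Wd n k) :
    pfx rfl w = x ∧ sfx rfl w = r ↔ w = Fin.append x r := by
  constructor
  · rintro ⟨rfl, rfl⟩
    exact Fin.append_castAdd_natAdd.symm
  · rintro rfl
    exact ⟨funext (Fin.append_left x r), funext (Fin.append_right x r)⟩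

lemma wfst_append (x : Wd n m) (r : Wd n k) : wfst (Fin.append x r) = x :=
  funext (Fin.append_left x r)

lemma wsnd_append (x : Wd n m) (r : Wd n k) : wsnd (Fin.append x r) = r :=
  funext (Fin.append_right x r)

lemma eq_letter_iff {j : Fin n} {x : Wd n 1} : x = letter j ↔ x 0 = j := by
  simp [funext_iff, Fin.forall_fin_one, letter]

noncomputable def rcreateW (h : m + k = l) (r : Wd n k) : TP n m →L[ℂ] TP n l :=
  ofMatR (Matrix.of fun w v => if sfx h w = r ∧ pfx h w = v then 1 else 0)

noncomputable def lcreateW (h : m + k = l) (j : Wd n m) : TP n k →L[ℂ] TP n l :=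
  ofMatR (Matrix.of fun w v => if pfx h w = j ∧ sfx h w = v then 1 else 0)

lemma sum_rcreateW_comp_adjoint (h : m + k = l) (B : TP n m →L[ℂ] TP n m) :
    ∑ r, rcreateW h r ∘L B ∘L adjoint (rcreateW h r) =
      opTG (by omega) B (ContinuousLinearMap.id ℂ (TP n (l - m))) := by
  conv_lhs => rw [← ofMatR_of_ent B]
  simp only [rcreateW, adjoint_ofMatR, ← ofMatR_mul, ← ofMatR_sum, opTG]
  congr 1
  ext w v
  simp [Matrix.sum_apply, Matrix.mul_apply, ent_id, dr_eq_dr_iff h, tk_eq_pfx h, ite_and,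
    Finset.sum_ite_irrel, apply_ite (starRingEnd ℂ), eq_comm (a := sfx h v)]

lemma sum_ent_smul_lcreateW_comp_adjoint (h : m + k = l) (B : TP n m →L[ℂ] TP n m) :
    ∑ j, ∑ j', ent B j j' • (lcreateW h j ∘L adjoint (lcreateW h j')) =
      opTG (by omega) B (ContinuousLinearMap.id ℂ (TP n (l - m))) := by
  simp only [lcreateW, adjoint_ofMatR, ← ofMatR_mul, ← ofMatR_smul, ← ofMatR_sum, opTG]
  congr 1
  ext w v
  simp [Matrix.sum_apply, Matrix.mul_apply, ent_id, dr_eq_dr_iff h, tk_eq_pfx h, ite_and,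
    Finset.sum_ite_irrel, apply_ite (starRingEnd ℂ)]

lemma rcreateW_zero (r : Wd n 0) :
    rcreateW (rfl : m + 0 = m + 0) r = ContinuousLinearMap.id ℂ _ := by
  rw [rcreateW, ← ofMatR_one]
  congr 1
  ext w v
  simp [Matrix.one_apply, Subsingleton.elim (sfx rfl w) r]
  rfl

lemma lcreateW_zero (j : Wd n 0) :
    lcreateW (Nat.add_comm 0 k) j = ContinuousLinearMap.id ℂ _ := by
  rw [lcreateW, ← ofMatR_one]
  congr 1
  ext w v
  have : sfx (Nat.add_comm 0 k) w = w := funext fun i => congrArg w (Fin.ext (Nat.zero_add i))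
  simp [Matrix.one_apply, Subsingleton.elim (pfx _ w) j, this]

lemma rcreate_eq_rcreateW (j : Fin n) (a : ℕ) : rcreate j a = rcreateW rfl (letter j) := by
  simp only [rcreate, rcreateW, eq_letter_iff]
  rfl

lemma lcreate_eq_lcreateW (j : Fin n) (a : ℕ) :
    lcreate j a = lcreateW (Nat.add_comm 1 a) (letter j) := by
  simp only [lcreate, lcreateW, eq_letter_iff]
  congr 3
  ext w v
  have : sfx (Nat.add_comm 1 a) w = fun i => w i.succ :=
    funext fun i => congrArg w (Fin.ext (Nat.add_comm 1 i))
  simp [this]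
  rfl

lemma rcreate_comp_rcreateW (d : ℕ) (r : Wd n (d + 1)) :
    rcreate (r (Fin.last d)) (m + d) ∘L rcreateW rfl (Fin.init r) = rcreateW rfl r := by
  rw [rcreate_eq_rcreateW, rcreateW, rcreateW, rcreateW, ← ofMatR_mul]
  congr 1
  ext w v
  rw [Matrix.mul_apply, Finset.sum_eq_single (pfx rfl w) (fun u _ hu => by simp [Ne.symm hu])
    (by simp)]
  simp only [Matrix.of_apply, eq_letter_iff, ite_and, mul_ite, mul_one, mul_zero]
  split_ifs <;> simp_all [funext_iff, Fin.forall_fin_succ', sfx, pfx, Fin.init]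

lemma lcreate_comp_lcreateW (d : ℕ) (r : Wd n (d + 1)) :
    lcreate (r 0) (k + d) ∘L lcreateW (Nat.add_comm d k) (Fin.tail r) =
      lcreateW (Nat.add_comm (d + 1) k) r := by
  rw [lcreate_eq_lcreateW, lcreateW, lcreateW, lcreateW, ← ofMatR_mul]
  congr 1
  ext w v
  rw [Matrix.mul_apply, Finset.sum_eq_single (sfx (Nat.add_comm 1 (k + d)) w)
    (fun u _ hu => by simp [Ne.symm hu]) (by simp)]
  simp only [Matrix.of_apply, eq_letter_iff, ite_and, mul_ite, mul_one, mul_zero]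
  split_ifs <;>
    simp_all [funext_iff, Fin.forall_fin_succ, sfx, pfx, Fin.tail, add_comm, add_left_comm, add_assoc]

lemma adjoint_rcreateW_tmul (r : Wd n k) (u : TP n m) (v : TP n k) :
    adjoint (rcreateW rfl r) (tmul u v) = v r • u := by
  ext x
  simp [rcreateW, adjoint_ofMatR, ofMatR_apply, and_comm (a := sfx rfl _ = r), pfx_sfx_eq_iff,
    tmul, wfst_append, wsnd_append, mul_comm]

lemma adjoint_lcreateW_tmul (j : Wd n m) (u : TP n m) (v : TP n k) :
    adjoint (lcreateW rfl j) (tmul u v) = u j • v := by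
  ext x
  simp [lcreateW, adjoint_ofMatR, ofMatR_apply, pfx_sfx_eq_iff, tmul, wfst_append, wsnd_append]

end Words
section Subproduct

variable (H : ∀ m, Submodule ℂ (TP n m))

lemma prj_adjoint (a : ℕ) : adjoint (prj H a) = prj H a :=
  (isSelfAdjoint_starProjection (H a)).adjoint_eq

lemma prj_apply_mem {a : ℕ} (x : TP n a) : prj H a x ∈ H a :=
  Submodule.coe_mem _

lemma prj_apply_of_mem {a : ℕ} {x : TP n a} (hx : x ∈ H a) : prj H a x = x :=
  Submodule.starProjection_eq_self_iff.mpr hx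

lemma cmpOp_congr {a : ℕ} {X Y : TP n a →L[ℂ] TP n a}
    (h : prj H a ∘L X ∘L prj H a = prj H a ∘L Y ∘L prj H a) : cmpOp H X = cmpOp H Y := by
  ext ξ : 1
  apply Subtype.ext
  simpa [cmpOp, prj, prj_apply_of_mem H ξ.2] using congr($h ξ)

variable {H} {m k l : ℕ}

lemma IsSubproduct.adjoint_rcreateW_mem (hsp : IsSubproduct H) (h : m + k = l) (r : Wd n k)
    {y : TP n l} (hy : y ∈ H l) : adjoint (rcreateW h r) y ∈ H m := by
  subst h
  have : tensorSub (H m) (H k) ≤ (H m).comap (adjoint (rcreateW rfl r)).toLinearMap := by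
    refine Submodule.span_le.2 ?_
    rintro _ ⟨u, hu, v, -, rfl⟩
    simpa [adjoint_rcreateW_tmul] using Submodule.smul_mem _ (v r) hu
  exact this (hsp.2 m k hy)

lemma IsSubproduct.adjoint_lcreateW_mem (hsp : IsSubproduct H) (h : m + k = l) (j : Wd n m)
    {y : TP n l} (hy : y ∈ H l) : adjoint (lcreateW h j) y ∈ H k := by
  subst h
  have : tensorSub (H m) (H k) ≤ (H k).comap (adjoint (lcreateW rfl j)).toLinearMap := by
    refine Submodule.span_le.2 ?_
    rintro _ ⟨u, -, v, hv, rfl⟩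
    simpa [adjoint_lcreateW_tmul] using Submodule.smul_mem _ (u j) hv
  exact this (hsp.2 m k hy)

lemma IsSubproduct.adjoint_rsh_apply (hsp : IsSubproduct H) (j : Fin n) (a : ℕ)
    {y : TP n (a + 1)} (hy : y ∈ H (a + 1)) :
    adjoint (rsh H j a) y = adjoint (rcreate j a) y := by
  simp only [rsh, adjoint_comp, prj_adjoint, comp_apply, prj_apply_of_mem H hy]
  rw [rcreate_eq_rcreateW]
  exact prj_apply_of_mem H (hsp.adjoint_rcreateW_mem rfl _ hy)

lemma IsSubproduct.adjoint_lsh_apply (hsp : IsSubproduct H) (j : Fin n) (a : ℕ)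
    {y : TP n (a + 1)} (hy : y ∈ H (a + 1)) :
    adjoint (lsh H j a) y = adjoint (lcreate j a) y := by
  simp only [lsh, adjoint_comp, prj_adjoint, comp_apply, prj_apply_of_mem H hy]
  rw [lcreate_eq_lcreateW]
  exact prj_apply_of_mem H (hsp.adjoint_lcreateW_mem _ _ hy)

lemma IsSubproduct.adjoint_rshW_apply (hsp : IsSubproduct H) (d : ℕ) (r : Wd n d)
    {y : TP n (m + d)} (hy : y ∈ H (m + d)) :
    adjoint (rshW H m d r) y = adjoint (rcreateW rfl r) y := by
  induction d with
  | zero => rw [rcreateW_zero]; rfl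
  | succ d ih =>
    have hy' : adjoint (rcreate (r (Fin.last d)) (m + d)) y ∈ H (m + d) := by
      rw [rcreate_eq_rcreateW]; exact hsp.adjoint_rcreateW_mem rfl _ hy
    rw [rshW, adjoint_comp, comp_apply, hsp.adjoint_rsh_apply _ (m + d) hy, ih _ hy',
      ← rcreate_comp_rcreateW, adjoint_comp, comp_apply]

lemma IsSubproduct.adjoint_lshW_apply (hsp : IsSubproduct H) (d : ℕ) (r : Wd n d)
    {y : TP n (k + d)} (hy : y ∈ H (k + d)) :
    adjoint (lshW H k d r) y = adjoint (lcreateW (Nat.add_comm d k) r) y := by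
  induction d with
  | zero => rw [lcreateW_zero]; rfl
  | succ d ih =>
    have hy' : adjoint (lcreate (r 0) (k + d)) y ∈ H (k + d) := by
      rw [lcreate_eq_lcreateW]; exact hsp.adjoint_lcreateW_mem _ _ hy
    rw [lshW, adjoint_comp, comp_apply, hsp.adjoint_lsh_apply _ (k + d) hy, ih _ hy',
      ← lcreate_comp_lcreateW, adjoint_comp, comp_apply]

lemma prj_comp_eq_of_adjoint_apply {a b : ℕ} {S T : TP n b →L[ℂ] TP n a}
    (h : ∀ y ∈ H a, adjoint S y = adjoint T y) : prj H a ∘L S = prj H a ∘L T := by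
  have h' : adjoint S ∘L prj H a = adjoint T ∘L prj H a :=
    ContinuousLinearMap.ext fun y => h _ (prj_apply_mem H y)
  simpa [adjoint_comp, prj_adjoint] using congr(adjoint $h')

lemma IsSubproduct.prj_comp_rshW (hsp : IsSubproduct H) (d : ℕ) (r : Wd n d) :
    prj H (m + d) ∘L rshW H m d r = prj H (m + d) ∘L rcreateW rfl r :=
  prj_comp_eq_of_adjoint_apply fun _ hy => hsp.adjoint_rshW_apply d r hy

lemma IsSubproduct.prj_comp_lshW (hsp : IsSubproduct H) (d : ℕ) (r : Wd n d) :
    prj H (k + d) ∘L lshW H k d r = prj H (k + d) ∘L lcreateW (Nat.add_comm d k) r :=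
  prj_comp_eq_of_adjoint_apply fun _ hy => hsp.adjoint_lshW_apply d r hy

lemma prj_conj_prj_congr {a b : ℕ} {S S' T T' : TP n b →L[ℂ] TP n a}
    (hS : prj H a ∘L S = prj H a ∘L T) (hS' : prj H a ∘L S' = prj H a ∘L T')
    (B : TP n b →L[ℂ] TP n b) :
    prj H a ∘L (S ∘L B ∘L adjoint S') ∘L prj H a =
      prj H a ∘L (T ∘L B ∘L adjoint T') ∘L prj H a := by
  have h' : adjoint S' ∘L prj H a = adjoint T' ∘L prj H a := by
    simpa [adjoint_comp, prj_adjoint] using congr(adjoint $hS')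
  calc prj H a ∘L (S ∘L B ∘L adjoint S') ∘L prj H a
      = (prj H a ∘L S) ∘L B ∘L (adjoint S' ∘L prj H a) := by simp only [comp_assoc]
    _ = (prj H a ∘L T) ∘L B ∘L (adjoint T' ∘L prj H a) := by rw [hS, h']
    _ = prj H a ∘L (T ∘L B ∘L adjoint T') ∘L prj H a := by simp only [comp_assoc]

end Subproduct

/-- **Statement 5.** `ι_{m,l}(A) = Σ_{|r|=l-m} R_r A R_r^* |_{H_l}
= Σ_{|j|=m=|k|} A_{j,k} S_j S_k^* |_{H_l}`. -/
theorem stmt5 {n : ℕ} (H : ∀ m, Submodule ℂ (TP n m)) (hsp : IsSubproduct H)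
    (m k : ℕ) (A : ↥(H m) →L[ℂ] ↥(H m)) :
    iota H (Nat.le_add_right m k) A =
      cmpOp H (∑ r : Wd n k,
        rshW H m k r ∘L extOp H A ∘L ContinuousLinearMap.adjoint (rshW H m k r)) ∧
    iota H (Nat.le_add_left m k) A =
      cmpOp H (∑ j : Wd n m, ∑ j' : Wd n m, ent (extOp H A) j j' •
        (lshW H k m j ∘L ContinuousLinearMap.adjoint (lshW H k m j'))) := by
  constructor
  · rw [iota, ← sum_rcreateW_comp_adjoint rfl]
    refine cmpOp_congr H ?_
    simp only [comp_finsetSum, finsetSum_comp]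
    refine Finset.sum_congr rfl fun r _ => ?_
    exact (prj_conj_prj_congr (hsp.prj_comp_rshW k r) (hsp.prj_comp_rshW k r) _).symm
  · rw [iota, ← sum_ent_smul_lcreateW_comp_adjoint (Nat.add_comm m k)]
    refine cmpOp_congr H ?_
    simp only [comp_finsetSum, finsetSum_comp, comp_smul, smul_comp]
    refine Finset.sum_congr rfl fun j _ => Finset.sum_congr rfl fun j' _ => congrArg _ ?_
    simpa only [id_comp] using
      (prj_conj_prj_congr (hsp.prj_comp_lshW m j) (hsp.prj_comp_lshW m j')
        (ContinuousLinearMap.id ℂ _)).symm
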